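/- arXiv:1108.1508 — 3 statements merged into one kernel-verified Lean document; each statement's English description precedes it below -/
import Mathlib

section
/- Fix a prime r, a primitive root q mod r, and n with 1 ≤ n ≤ r-2. The map i ↦ {q^i} - {q^{i+n}} from {1, 2, ..., r-1-n} to the integers is injective; consequently the set {S(i,n) : 1 ≤ i ≤ r-1-n} has cardinality exactly r-1-n. -/
/-!
Reduced mod `r`, the difference `{q^i} - {q^(i+n)}` becomes `q^i (1 - q^n)`. Since `q` has order
`r - 1` and `0 < n < r - 1` (otherwise the index range is empty), the factor `1 - q^n` is a unit
of `ZMod r`, so equal differences force `q^i = q^j`, hence `i = j` as both exponents are below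
`r - 1`.
-/

namespace IsPrimitiveRoot

variable {R : Type*} [CommRing R] [IsDomain R] {ζ : R} {k n : ℕ}

theorem injOn_pow_sub_pow_add (hζ : IsPrimitiveRoot ζ k) (hn : 0 < n) :
    Set.InjOn (fun i => ζ ^ i - ζ ^ (i + n)) (Set.Icc 1 (k - n)) := by
  intro i hi j hj hij
  simp only [Set.mem_Icc, pow_add] at hi hj hij
  have hζn : 1 - ζ ^ n ≠ 0 :=
    sub_ne_zero.mpr (hζ.pow_ne_one_of_pos_of_lt hn.ne' (by omega)).symm
  have hfactor : ζ ^ i * (1 - ζ ^ n) = ζ ^ j * (1 - ζ ^ n) := by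
    linear_combination hij
  exact hζ.pow_inj (by omega) (by omega) (mul_right_cancel₀ hζn hfactor)

end IsPrimitiveRoot

theorem stmt2_general (r q n : ℕ) (hr : r.Prime)
    (hq : IsPrimitiveRoot (q : ZMod r) (r - 1))
    (hn1 : 1 ≤ n) :
    Set.InjOn (fun i => ((q ^ i % r : ℕ) : ℤ) - ((q ^ (i + n) % r : ℕ) : ℤ))
      (Set.Icc 1 (r - 1 - n)) ∧
    ((Finset.Icc 1 (r - 1 - n)).image
      (fun i => ((q ^ i % r : ℕ) : ℤ) - ((q ^ (i + n) % r : ℕ) : ℤ))).card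
      = r - 1 - n := by
  have : Fact r.Prime := ⟨hr⟩
  have hinj : Set.InjOn (fun i => ((q ^ i % r : ℕ) : ℤ) - ((q ^ (i + n) % r : ℕ) : ℤ))
      (Set.Icc 1 (r - 1 - n)) := by
    refine Set.InjOn.of_comp (g := ((↑) : ℤ → ZMod r)) ?_
    convert hq.injOn_pow_sub_pow_add hn1 using 2 with i
    simp
  refine ⟨hinj, ?_⟩
  rw [Finset.card_image_of_injOn (by rwa [Finset.coe_Icc]), Nat.card_Icc, Nat.add_sub_cancel]

theorem stmt2 (r q n : ℕ) (hr : r.Prime)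
    (hq : IsPrimitiveRoot (q : ZMod r) (r - 1))
    (hn1 : 1 ≤ n) (hn2 : n ≤ r - 2) :
    Set.InjOn (fun i => ((q ^ i % r : ℕ) : ℤ) - ((q ^ (i + n) % r : ℕ) : ℤ))
      (Set.Icc 1 (r - 1 - n)) ∧
    ((Finset.Icc 1 (r - 1 - n)).image
      (fun i => ((q ^ i % r : ℕ) : ℤ) - ((q ^ (i + n) % r : ℕ) : ℤ))).card
      = r - 1 - n :=
  stmt2_general r q n hr hq hn1
end

section
/- Let r be an odd prime and q a primitive root mod r with q odd. Let σ_i be the parity (element of Z/2Z) of {q^i} - {q^{i+1}}, and let M_0 = {i ∈ {1,...,r-1} : σ_i = 0}, M_1 = {i ∈ {1,...,r-1} : σ_i = 1}. Then | |M_0| - |M_1| | ≤ r/q + q - 1. -/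
/-!
Since `q` and `r` are odd, `{q^i} - {q^(i+1)}` has the parity of `⌊q {q^i} / r⌋`, and `i ↦ {q^i}`
permutes `1, …, r - 1`; hence `|M₀| - |M₁| = ∑_{a=1}^{r-1} (-1)^⌊q a / r⌋`. The `a` with
`⌊q a / r⌋ = j` fill the interval `[⌈j r / q⌉, ⌈(j + 1) r / q⌉)`, and summation by parts turns the
alternating sum of these lengths into `r - 2 ∑_{k<(q-1)/2} (⌈(2k+2) r / q⌉ - ⌈(2k+1) r / q⌉)`,
where each bracket is within `1` of `r / q`.
-/

open Finset

lemma sum_neg_one_pow_eq_card_filter_even_sub {α R : Type*} [Ring R] (s : Finset α)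
    (n : α → ℕ) :
    ∑ i ∈ s, (-1 : R) ^ n i = #(s.filter fun i => Even (n i)) - #(s.filter fun i => Odd (n i)) := by
  rw [← sum_filter_add_sum_filter_not s fun i => Even (n i)]
  simp_rw [Nat.not_even_iff_odd]
  rw [sum_congr rfl fun i hi => ((mem_filter.1 hi).2.neg_one_pow : (-1 : R) ^ n i = 1),
    sum_congr rfl fun i hi => ((mem_filter.1 hi).2.neg_one_pow : (-1 : R) ^ n i = -1)]
  simp [sub_eq_add_neg]

lemma even_sub_mul_mod_iff {q r : ℕ} (hq : Odd q) (hr : Odd r) (a : ℕ) :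
    Even ((a : ℤ) - ((q * a % r : ℕ) : ℤ)) ↔ Even (q * a / r) := by
  have h : ((q * a % r : ℕ) : ℤ) = q * a - r * ((q * a / r : ℕ) : ℤ) := by
    rw [eq_sub_iff_add_eq]
    exact_mod_cast Nat.mod_add_div (q * a) r
  rw [h, Int.even_sub, Int.even_sub, Int.even_mul, Int.even_mul]
  simp only [Int.even_coe_nat, Nat.not_even_iff_odd.2 hq, Nat.not_even_iff_odd.2 hr, false_or]
  tauto

lemma IsPrimitiveRoot.sum_pow_mod {r q : ℕ} (hq : IsPrimitiveRoot (q : ZMod r) (r - 1))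
    {M : Type*} [AddCommMonoid M] (g : ℕ → M) :
    ∑ i ∈ Icc 1 (r - 1), g (q ^ i % r) = ∑ a ∈ Ico 1 r, g a := by
  have hcast (i : ℕ) : ((q ^ i % r : ℕ) : ZMod r) = (q : ZMod r) ^ i := by
    rw [ZMod.natCast_mod, Nat.cast_pow]
  have hmaps : Set.MapsTo (fun i => q ^ i % r) (Icc 1 (r - 1)) (Ico 1 r) := by
    intro i hi
    simp only [coe_Icc, Set.mem_Icc] at hi
    have : Fact (1 < r) := ⟨by omega⟩
    have hne : ((q ^ i % r : ℕ) : ZMod r) ≠ 0 := by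
      rw [hcast]
      exact ((hq.isUnit (by omega)).pow i).ne_zero
    simp only [coe_Ico, Set.mem_Ico]
    exact ⟨Nat.one_le_iff_ne_zero.2 (by rintro h; simp [h] at hne), Nat.mod_lt _ (by omega)⟩
  have hinj : Set.InjOn (fun i => q ^ i % r) (Icc 1 (r - 1)) := by
    intro i hi j hj hij
    simp only [coe_Icc, Set.mem_Icc] at hi hj
    have hmod : i ≡ j [MOD r - 1] := by
      rw [hq.eq_orderOf, ← (hq.isOfFinOrder (by omega)).pow_eq_pow_iff_modEq, ← hcast, ← hcast]
      exact congrArg _ hij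
    have := (Nat.ModEq.add_right_cancel' 1 (show i - 1 + 1 ≡ j - 1 + 1 [MOD r - 1] by
      rwa [Nat.sub_add_cancel hi.1, Nat.sub_add_cancel hj.1])).eq_of_lt_of_lt (by omega) (by omega)
    omega
  exact sum_nbij _ hmaps hinj (surjOn_of_injOn_of_card_le _ hmaps hinj (by simp)) fun _ _ => rfl

noncomputable def ceilMulDiv (q r j : ℕ) : ℕ := ⌈(j * r / q : ℝ)⌉₊

section CeilMulDiv

variable {q : ℕ} (r : ℕ)

lemma lt_ceilMulDiv_iff (hq : 0 < q) {a j : ℕ} : a < ceilMulDiv q r j ↔ q * a < j * r := by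
  rw [ceilMulDiv, Nat.lt_ceil, lt_div_iff₀ (by exact_mod_cast hq), mul_comm]
  exact_mod_cast Iff.rfl

lemma ceilMulDiv_mono (j : ℕ) : ceilMulDiv q r j ≤ ceilMulDiv q r (j + 1) := by
  unfold ceilMulDiv
  gcongr
  simp

lemma ceilMulDiv_zero : ceilMulDiv q r 0 = 0 := by
  simp [ceilMulDiv]

lemma ceilMulDiv_self (hq : q ≠ 0) : ceilMulDiv q r q = r := by
  rw [ceilMulDiv, mul_div_cancel_left₀ _ (by exact_mod_cast hq), Nat.ceil_natCast]

lemma ceilMulDiv_bounds (j : ℕ) :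
    (j * (r / q) : ℝ) ≤ ceilMulDiv q r j ∧ (ceilMulDiv q r j : ℝ) < j * (r / q) + 1 := by
  rw [← mul_div_assoc]
  exact ⟨Nat.le_ceil _, Nat.ceil_lt_add_one (by positivity)⟩

lemma div_eq_of_mem_Ico_ceilMulDiv (hq : 0 < q) {a j : ℕ}
    (ha : a ∈ Ico (ceilMulDiv q r j) (ceilMulDiv q r (j + 1))) : q * a / r = j := by
  rw [mem_Ico, ← not_lt, lt_ceilMulDiv_iff r hq, lt_ceilMulDiv_iff r hq, not_lt] at ha
  exact Nat.div_eq_of_lt_le ha.1 ha.2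

lemma sum_range_ceilMulDiv {M : Type*} [AddCommMonoid M] (hq : 0 < q) (f : ℕ → M) (n : ℕ) :
    ∑ a ∈ range (ceilMulDiv q r n), f (q * a / r) =
      ∑ j ∈ range n, (ceilMulDiv q r (j + 1) - ceilMulDiv q r j) • f j := by
  induction n with
  | zero => simp [ceilMulDiv_zero]
  | succ n ih =>
    rw [← sum_range_add_sum_Ico _ (ceilMulDiv_mono r n), ih, sum_range_succ,
      sum_congr rfl fun a ha => congrArg f (div_eq_of_mem_Ico_ceilMulDiv r hq ha),
      sum_const, Nat.card_Ico]

end CeilMulDiv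

lemma sum_range_neg_one_pow_mul_sub {R : Type*} [CommRing R] (G : ℕ → R) (m : ℕ) :
    ∑ j ∈ range (2 * m + 1), (-1) ^ j * (G (j + 1) - G j) =
      G (2 * m + 1) - G 0 - 2 * ∑ k ∈ range m, (G (2 * k + 2) - G (2 * k + 1)) := by
  induction m with
  | zero => simp
  | succ m ih =>
    rw [show 2 * (m + 1) + 1 = 2 * m + 1 + 1 + 1 by ring, sum_range_succ, sum_range_succ, ih,
      sum_range_succ]
    simp only [pow_succ, Even.neg_one_pow (even_two_mul m)]
    ring

lemma abs_sum_range_neg_one_pow_div_sub_le {q : ℕ} (hq : Odd q) (r : ℕ) :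
    |∑ a ∈ range r, (-1 : ℝ) ^ (q * a / r) - r / q| ≤ q - 1 := by
  obtain ⟨m, hm⟩ := hq
  have hq0 : 0 < q := by omega
  set G : ℕ → ℝ := fun j => ceilMulDiv q r j
  have hsum : ∑ a ∈ range r, (-1 : ℝ) ^ (q * a / r) =
      r - 2 * ∑ k ∈ range m, (G (2 * k + 2) - G (2 * k + 1)) := by
    have h := sum_range_ceilMulDiv r hq0 (fun j => (-1 : ℝ) ^ j) q
    rw [ceilMulDiv_self r hq0.ne'] at h
    rw [h, show range q = range (2 * m + 1) by rw [hm], sum_congr rfl fun j _ => by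
      rw [nsmul_eq_mul, Nat.cast_sub (ceilMulDiv_mono r j), mul_comm],
      sum_range_neg_one_pow_mul_sub G m, ← hm]
    simp [G, ceilMulDiv_self r hq0.ne', ceilMulDiv_zero]
  have hstep : ∀ k, |G (2 * k + 2) - G (2 * k + 1) - r / q| ≤ 1 := by
    intro k
    have h1 := ceilMulDiv_bounds (q := q) r (2 * k + 1)
    have h2 := ceilMulDiv_bounds (q := q) r (2 * k + 2)
    push_cast at h1 h2
    rw [abs_le]
    constructor <;> linarith
  have hq' : (q : ℝ) = 2 * m + 1 := by exact_mod_cast hm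
  calc |∑ a ∈ range r, (-1 : ℝ) ^ (q * a / r) - r / q|
      = 2 * |∑ k ∈ range m, (G (2 * k + 2) - G (2 * k + 1) - r / q)| := by
        rw [sum_sub_distrib, sum_const, card_range, nsmul_eq_mul, hsum, ← abs_two, ← abs_mul,
          ← abs_neg]
        congr 1
        rw [hq']
        field_simp
        ring
    _ ≤ 2 * ∑ k ∈ range m, 1 := by
        gcongr
        exact (abs_sum_le_sum_abs _ _).trans (sum_le_sum fun k _ => hstep k)
    _ = q - 1 := by simp [hq']

lemma abs_sum_Ico_neg_one_pow_div_le {q : ℕ} (hq : Odd q) (r : ℕ) :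
    |∑ a ∈ Ico 1 r, (-1 : ℝ) ^ (q * a / r)| ≤ r / q + q - 1 := by
  have hrq : (0 : ℝ) ≤ r / q := by positivity
  rcases lt_or_ge (2 * r) q with hsmall | hlarge
  · have hcard : ((#(Ico 1 r) : ℕ) : ℝ) ≤ q - 1 := by
      rw [Nat.card_Ico, ← Nat.cast_pred hq.pos]
      exact_mod_cast (by omega : r - 1 ≤ q - 1)
    calc |∑ a ∈ Ico 1 r, (-1 : ℝ) ^ (q * a / r)|
        ≤ ∑ a ∈ Ico 1 r, |(-1 : ℝ) ^ (q * a / r)| := abs_sum_le_sum_abs _ _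
      _ = #(Ico 1 r) := by simp
      _ ≤ r / q + q - 1 := by linarith
  · have hr : 0 < r := by have := hq.pos; omega
    have h := abs_sum_range_neg_one_pow_div_sub_le hq r
    rw [sum_range_eq_add_Ico _ hr, Nat.mul_zero, Nat.zero_div, pow_zero] at h
    have hhalf : (1 : ℝ) ≤ 2 * (r / q) := by
      rw [mul_div_assoc', le_div_iff₀ (by exact_mod_cast hq.pos)]
      exact_mod_cast (by omega : 1 * q ≤ 2 * r)
    rw [abs_le] at h ⊢
    constructor <;> linarith

theorem stmt3_general (r q : ℕ) (hrodd : Odd r)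
    (hq : IsPrimitiveRoot (q : ZMod r) (r - 1)) (hqodd : Odd q) :
    abs
      (((((Finset.Icc 1 (r - 1)).filter
          (fun i => (((q ^ i % r : ℕ) : ℤ) - ((q ^ (i + 1) % r : ℕ) : ℤ)) % 2 = 0)).card : ℝ))
      - ((((Finset.Icc 1 (r - 1)).filter
          (fun i => (((q ^ i % r : ℕ) : ℤ) - ((q ^ (i + 1) % r : ℕ) : ℤ)) % 2 = 1)).card : ℝ)))
      ≤ (r : ℝ) / q + q - 1 := by
  have hparity (i : ℕ) : Even (((q ^ i % r : ℕ) : ℤ) - ((q ^ (i + 1) % r : ℕ) : ℤ)) ↔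
      Even (q * (q ^ i % r) / r) := by
    rw [pow_succ', ← Nat.mul_mod_mod]
    exact even_sub_mul_mod_iff hqodd hrodd _
  have heven : (Icc 1 (r - 1)).filter
      (fun i => (((q ^ i % r : ℕ) : ℤ) - ((q ^ (i + 1) % r : ℕ) : ℤ)) % 2 = 0) =
      (Icc 1 (r - 1)).filter fun i => Even (q * (q ^ i % r) / r) :=
    filter_congr fun i _ => by rw [← Int.even_iff, hparity]
  have hodd : (Icc 1 (r - 1)).filter
      (fun i => (((q ^ i % r : ℕ) : ℤ) - ((q ^ (i + 1) % r : ℕ) : ℤ)) % 2 = 1) =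
      (Icc 1 (r - 1)).filter fun i => Odd (q * (q ^ i % r) / r) :=
    filter_congr fun i _ => by
      rw [← Int.odd_iff, ← Int.not_even_iff_odd, hparity, Nat.not_even_iff_odd]
  rw [heven, hodd, ← sum_neg_one_pow_eq_card_filter_even_sub,
    hq.sum_pow_mod fun a => (-1 : ℝ) ^ (q * a / r)]
  exact abs_sum_Ico_neg_one_pow_div_le hqodd r

theorem stmt3 (r q : ℕ) (hr : r.Prime) (hrodd : Odd r)
    (hq : IsPrimitiveRoot (q : ZMod r) (r - 1)) (hqodd : Odd q) :
    abs
      (((((Finset.Icc 1 (r - 1)).filter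
          (fun i => (((q ^ i % r : ℕ) : ℤ) - ((q ^ (i + 1) % r : ℕ) : ℤ)) % 2 = 0)).card : ℝ))
      - ((((Finset.Icc 1 (r - 1)).filter
          (fun i => (((q ^ i % r : ℕ) : ℤ) - ((q ^ (i + 1) % r : ℕ) : ℤ)) % 2 = 1)).card : ℝ)))
      ≤ (r : ℝ) / q + q - 1 :=
  stmt3_general r q hrodd hq hqodd
end

section
/- Let r be an odd prime, q a primitive root modulo r with 1 < q < √r, q odd. Then both sets M_0 and M_1 (indices i ∈ {1,...,r-1} where {q^i} - {q^{i+1}} is even, resp. odd) are nonempty; in fact |M_0| ≥ (r-1)/2 - (r/q + q - 1)/2 and |M_1| ≥ (r-1)/2 - (r/q + q - 1)/2. -/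
/-!
As q and r are odd, `{q^i} - {q^(i+1)} = {q^i} - q{q^i} + r⌊q{q^i}/r⌋` has the parity of
`⌊q{q^i}/r⌋`. Since q is a primitive root, `i ↦ {q^i}` permutes `{1, …, r-1}`, so `|M_c|` is the
number of `a ∈ {1, …, r-1}` with `⌊qa/r⌋ ≡ c (mod 2)`. For each `k < q` the `⌊r/q⌋` numbers
`a = ⌊kr/q⌋ + 1 + j` satisfy `⌊qa/r⌋ = k`, and each parity class contains `(q-1)/2` such `k`, so
`|M_c| ≥ (q-1)/2 · ⌊r/q⌋`. This beats the stated bound, which is positive as soon as `q² < r`.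
-/

open Finset

theorem sub_mul_mod_emod_two {r q : ℕ} (hr : Odd r) (hq : Odd q) (a : ℕ) :
    ((a : ℤ) - ((q * a % r : ℕ) : ℤ)) % 2 = ((q * a / r % 2 : ℕ) : ℤ) := by
  obtain ⟨s, rfl⟩ := hr
  obtain ⟨t, rfl⟩ := hq
  have hdiv := Nat.div_add_mod ((2 * t + 1) * a) (2 * s + 1)
  have hqa : (2 * t + 1) * a = 2 * (t * a) + a := by ring
  have hrx : ∀ x, (2 * s + 1) * x = 2 * (s * x) + x := fun x => by ring
  rw [hrx] at hdiv
  -- `omega` treats the products `t * a` and `s * ((2 * t + 1) * a / (2 * s + 1))` as atoms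
  omega

theorem Finset.card_filter_comp_of_injOn {α : Type*} [DecidableEq α] {s : Finset α} {f : α → α}
    (hf : Set.MapsTo f s s) (hinj : Set.InjOn f s) (p : α → Prop) [DecidablePred p] :
    #{a ∈ s | p (f a)} = #{a ∈ s | p a} := by
  have himage : s.image f = s :=
    eq_of_subset_of_card_le (image_subset_iff.mpr hf) (card_image_of_injOn hinj).ge
  rw [← card_image_of_injOn (hinj.mono (filter_subset _ s)), ← filter_image, himage]

namespace IsPrimitiveRoot

variable {n q : ℕ}

theorem pow_mod_mem_Icc (hn : 1 < n) (hq : IsPrimitiveRoot (q : ZMod n) (n - 1)) (i : ℕ) :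
    q ^ i % n ∈ Icc 1 (n - 1) := by
  have : Fact (1 < n) := ⟨hn⟩
  have hne : q ^ i % n ≠ 0 := fun h0 => by
    have : (q : ZMod n) ^ i = 0 := by
      rw [← Nat.cast_pow, ZMod.natCast_eq_zero_iff]; exact Nat.dvd_of_mod_eq_zero h0
    exact ((hq.isUnit (by omega)).pow i).ne_zero this
  have := Nat.mod_lt (q ^ i) (by omega : 0 < n)
  rw [mem_Icc]; omega

theorem injOn_pow_mod (hq : IsPrimitiveRoot (q : ZMod n) (n - 1)) :
    Set.InjOn (fun i => q ^ i % n) (Icc 1 (n - 1) : Finset ℕ) := by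
  intro i hi j hj hij
  simp only [coe_Icc, Set.mem_Icc] at hi hj
  have hpow : (q : ZMod n) ^ i = (q : ZMod n) ^ j := by
    simpa using (ZMod.natCast_eq_natCast_iff' (q ^ i) (q ^ j) n).mpr hij
  obtain ⟨i, rfl⟩ : ∃ i', i = i' + 1 := ⟨i - 1, by omega⟩
  obtain ⟨j, rfl⟩ : ∃ j', j = j' + 1 := ⟨j - 1, by omega⟩
  rw [pow_succ', pow_succ'] at hpow
  have := hq.pow_inj (by omega) (by omega) ((hq.isUnit (by omega)).mul_left_cancel hpow)
  omega

end IsPrimitiveRoot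

theorem Nat.mul_div_succ_add_div_eq {q r k j : ℕ} (hqr : ¬ q ∣ r) (hk : k < q) (hj : j < r / q) :
    q * (k * r / q + 1 + j) / r = k := by
  have hq : 0 < q := by omega
  apply Nat.div_eq_of_lt_le
  · calc k * r ≤ q * (k * r / q + 1) := (Nat.lt_mul_div_succ _ hq).le
      _ ≤ q * (k * r / q + 1 + j) := Nat.mul_le_mul_left _ (by omega)
  · have := Nat.mul_div_lt_iff_not_dvd.mpr hqr
    calc q * (k * r / q + 1 + j) = q * (k * r / q) + q * (j + 1) := by ring
      _ ≤ k * r + q * (r / q) := add_le_add (Nat.mul_div_le _ _) (Nat.mul_le_mul_left _ hj)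
      _ < (k + 1) * r := by rw [add_mul, one_mul]; omega

theorem card_mul_div_le_card_filter_div_mem {q r : ℕ} (hqr : ¬ q ∣ r) {K : Finset ℕ}
    (hK : ∀ k ∈ K, k < q) :
    #K * (r / q) ≤ #{a ∈ Icc 1 (r - 1) | q * a / r ∈ K} := by
  rw [← card_range (r / q), ← card_product]
  have hdiv : ∀ p ∈ K ×ˢ range (r / q), q * (p.1 * r / q + 1 + p.2) / r = p.1 := fun p hp => by
    rw [mem_product, mem_range] at hp
    exact Nat.mul_div_succ_add_div_eq hqr (hK _ hp.1) hp.2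
  refine card_le_card_of_injOn (fun p => p.1 * r / q + 1 + p.2) (fun p hp => ?_)
    (fun p hp p' hp' h => ?_)
  · have hp1 := hK _ (mem_product.mp hp).1
    have hr : 0 < r := Nat.pos_of_ne_zero (by rintro rfl; exact hqr (dvd_zero q))
    have hlt : q * (p.1 * r / q + 1 + p.2) < q * r := by
      rw [← Nat.div_lt_iff_lt_mul (by omega), hdiv p hp]; exact hp1
    have hlt' : p.1 * r / q + 1 + p.2 < r := Nat.lt_of_mul_lt_mul_left hlt
    simp only [mem_coe, mem_filter, mem_Icc, hdiv p hp]
    exact ⟨⟨le_add_right (le_add_left le_rfl), Nat.le_sub_one_of_lt hlt'⟩, (mem_product.mp hp).1⟩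
  · have hk : p.1 = p'.1 := by
      rw [← hdiv p hp, ← hdiv p' hp']; exact congrArg (fun a => q * a / r) h
    simp only at h
    rw [hk] at h
    exact Prod.ext hk (by omega)

theorem half_pred_mul_div_le_card_filter_div_mod_two {q r : ℕ} (hqr : ¬ q ∣ r) (hq : Odd q)
    {c : ℕ} (hc : c < 2) :
    (q - 1) / 2 * (r / q) ≤ #{a ∈ Icc 1 (r - 1) | q * a / r % 2 = c} := by
  obtain ⟨t, rfl⟩ := hq
  let K := (range t).image (2 * · + c)
  have hmemK : ∀ k, k ∈ K ↔ ∃ k' < t, 2 * k' + c = k := by simp [K]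
  have hK : #K = (2 * t + 1 - 1) / 2 := by
    rw [card_image_of_injective _ fun _ _ h => by omega]; simp
  calc (2 * t + 1 - 1) / 2 * (r / (2 * t + 1))
        ≤ #{a ∈ Icc 1 (r - 1) | (2 * t + 1) * a / r ∈ K} := by
        rw [← hK]
        refine card_mul_div_le_card_filter_div_mem hqr fun k hk => ?_
        obtain ⟨k', hk', rfl⟩ := (hmemK k).mp hk
        omega
    _ ≤ _ := card_le_card <| monotone_filter_right _ fun a _ ha => by
        obtain ⟨k', -, hk'⟩ := (hmemK _).mp ha
        omega

theorem card_filter_sub_pow_mod_emod_two {r q : ℕ} (hr : Odd r) (hr1 : 1 < r)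
    (hq : IsPrimitiveRoot (q : ZMod r) (r - 1)) (hqodd : Odd q) (c : ℕ) :
    #{i ∈ Icc 1 (r - 1) | (((q ^ i % r : ℕ) : ℤ) - ((q ^ (i + 1) % r : ℕ) : ℤ)) % 2 = c} =
      #{a ∈ Icc 1 (r - 1) | q * a / r % 2 = c} := by
  rw [← card_filter_comp_of_injOn (fun i _ => hq.pow_mod_mem_Icc hr1 i) hq.injOn_pow_mod
    (fun a => q * a / r % 2 = c)]
  congr 1
  refine filter_congr fun i _ => ?_
  rw [pow_succ', ← Nat.mul_mod_mod, sub_mul_mod_emod_two hr hqodd]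
  exact Int.natCast_inj

theorem half_sub_le_cast_half_mul_div {q : ℕ} (hq : Odd q) (r : ℕ) :
    ((r : ℝ) - 1) / 2 - ((r : ℝ) / q + q - 1) / 2 ≤ (((q - 1) / 2 * (r / q) : ℕ) : ℝ) := by
  obtain ⟨t, rfl⟩ := hq
  have hqpos : (0 : ℝ) < 2 * t + 1 := by positivity
  have hlt : (r : ℝ) / (2 * t + 1) < (r / (2 * t + 1) : ℕ) + 1 := by
    rw [div_lt_iff₀ hqpos]
    exact_mod_cast (Nat.lt_mul_div_succ r (by omega : 0 < 2 * t + 1)).trans_eq (mul_comm _ _)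
  have hr : (r : ℝ) = (2 * t + 1) * ((r : ℝ) / (2 * t + 1)) := by field_simp
  rw [show (2 * t + 1 - 1) / 2 = t by omega]
  push_cast
  nlinarith [mul_le_mul_of_nonneg_left hlt.le (Nat.cast_nonneg (α := ℝ) t)]

theorem half_sub_pos {q r : ℝ} (hq : 2 ≤ q) (hqr : q ^ 2 < r) :
    0 < (r - 1) / 2 - (r / q + q - 1) / 2 := by
  have hx : q < r / q := by rw [lt_div_iff₀ (by positivity)]; nlinarith
  have hr : r = q * (r / q) := by field_simp
  nlinarith [mul_lt_mul_of_pos_left hx (by linarith : 0 < q - 1)]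

theorem stmt12_general (r q : ℕ) (hrodd : Odd r)
    (hq : IsPrimitiveRoot (q : ZMod r) (r - 1)) (hqodd : Odd q)
    (hq1 : 1 < q) (hqr : (q : ℝ) < Real.sqrt r)
    (M0 M1 : Finset ℕ)
    (hM0 : M0 = (Finset.Icc 1 (r - 1)).filter
      (fun i => (((q ^ i % r : ℕ) : ℤ) - ((q ^ (i + 1) % r : ℕ) : ℤ)) % 2 = 0))
    (hM1 : M1 = (Finset.Icc 1 (r - 1)).filter
      (fun i => (((q ^ i % r : ℕ) : ℤ) - ((q ^ (i + 1) % r : ℕ) : ℤ)) % 2 = 1)) :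
    M0.Nonempty ∧ M1.Nonempty ∧
      ((r : ℝ) - 1) / 2 - ((r : ℝ) / q + q - 1) / 2 ≤ (M0.card : ℝ) ∧
      ((r : ℝ) - 1) / 2 - ((r : ℝ) / q + q - 1) / 2 ≤ (M1.card : ℝ) := by
  have hqr2 : (q : ℝ) ^ 2 < r := (Real.lt_sqrt (by positivity)).mp hqr
  have hr1 : 1 < r := by
    have : q ^ 2 < r := by exact_mod_cast hqr2
    nlinarith
  have hqndvd : ¬ q ∣ r := fun h => by
    have hcop := (ZMod.isUnit_iff_coprime q r).mp (hq.isUnit (by omega))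
    exact hq1.ne' (hcop.eq_one_of_dvd h)
  have hbound : ∀ c : ℕ, c < 2 → ((r : ℝ) - 1) / 2 - ((r : ℝ) / q + q - 1) / 2 ≤
      #{i ∈ Icc 1 (r - 1) | (((q ^ i % r : ℕ) : ℤ) - ((q ^ (i + 1) % r : ℕ) : ℤ)) % 2 = (c : ℤ)} :=
    fun c hc => by
      rw [card_filter_sub_pow_mod_emod_two hrodd hr1 hq hqodd]
      exact (half_sub_le_cast_half_mul_div hqodd r).trans
        (by exact_mod_cast half_pred_mul_div_le_card_filter_div_mod_two hqndvd hqodd hc)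
  have hpos := half_sub_pos (by exact_mod_cast hq1) hqr2
  have h0 := hbound 0 (by norm_num)
  have h1 := hbound 1 (by norm_num)
  simp only [Nat.cast_zero, Nat.cast_one] at h0 h1
  subst hM0 hM1
  exact ⟨card_pos.mp (by exact_mod_cast hpos.trans_le h0),
    card_pos.mp (by exact_mod_cast hpos.trans_le h1), h0, h1⟩

theorem stmt12 (r q : ℕ) (hr : r.Prime) (hrodd : Odd r)
    (hq : IsPrimitiveRoot (q : ZMod r) (r - 1)) (hqodd : Odd q)
    (hq1 : 1 < q) (hqr : (q : ℝ) < Real.sqrt r)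
    (M0 M1 : Finset ℕ)
    (hM0 : M0 = (Finset.Icc 1 (r - 1)).filter
      (fun i => (((q ^ i % r : ℕ) : ℤ) - ((q ^ (i + 1) % r : ℕ) : ℤ)) % 2 = 0))
    (hM1 : M1 = (Finset.Icc 1 (r - 1)).filter
      (fun i => (((q ^ i % r : ℕ) : ℤ) - ((q ^ (i + 1) % r : ℕ) : ℤ)) % 2 = 1)) :
    M0.Nonempty ∧ M1.Nonempty ∧
      ((r : ℝ) - 1) / 2 - ((r : ℝ) / q + q - 1) / 2 ≤ (M0.card : ℝ) ∧
      ((r : ℝ) - 1) / 2 - ((r : ℝ) / q + q - 1) / 2 ≤ (M1.card : ℝ) :=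
  stmt12_general r q hrodd hq hqodd hq1 hqr M0 M1 hM0 hM1
end
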